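/- Let α ∈ [0,1] and β₁, β₂, β₁′, β₂′ ∈ [0,1] satisfy (β₁+β₂)/2 = α and (β₁′+β₂′)/2 = α. Then the uniform mixture (1/2)·P_{α,β₁} + (1/2)·P_{α,β₂} equals the pushforward under the coordinate-swap map (y, b_c, b_s) ↦ (y, b_s, b_c) of the uniform mixture (1/2)·P_{β₁′,α} + (1/2)·P_{β₂′,α}, and both equal P_{α,α}. Hence two training setups with completely different underlying invariant coordinates induce the identical joint distribution on the observed data. -/
import Mathlib


open MeasureTheory
open scoped ENNReal

lemma smul_prod' {X Y : Type*} [MeasurableSpace X] [MeasurableSpace Y]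
    (c : ℝ≥0∞) (μ : Measure X) (ν : Measure Y) [SFinite ν] : ((c • μ).prod ν) = c • μ.prod ν := by
  ext s hs
  rw [Measure.prod_apply hs, Measure.smul_apply, Measure.prod_apply hs, lintegral_smul_measure, smul_eq_mul]

lemma prod_smul' {X Y : Type*} [MeasurableSpace X] [MeasurableSpace Y]
    (c : ℝ≥0∞) (μ : Measure X) (ν : Measure Y) [SFinite ν] : (μ.prod (c • ν)) = c • μ.prod ν := by
  ext s hs
  rw [Measure.prod_apply hs, Measure.smul_apply, Measure.prod_apply hs, smul_eq_mul,
    ← lintegral_const_mul _ (measurable_measure_prodMk_left hs)]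
  simp

/-- The Rademacher-type measure `Rad(γ)` on `ℤ`, putting mass `γ` on `-1` and `1-γ` on `1`. -/
noncomputable def radMeas (γ : ℝ) : Measure ℤ :=
  ENNReal.ofReal γ • Measure.dirac (-1) + ENNReal.ofReal (1 - γ) • Measure.dirac 1

/-- The two-piece environment `P_{α,β}`: the joint law of `(Y, Y·R_c, Y·R_s)` where
`Y ~ Rad(1/2)` (uniform on `{-1,1}`), `R_c ~ Rad(α)`, `R_s ~ Rad(β)`, mutually independent. -/
noncomputable def twoPiece (α β : ℝ) : Measure (ℤ × ℤ × ℤ) :=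
  Measure.map (fun t : ℤ × ℤ × ℤ => (t.1, t.1 * t.2.1, t.1 * t.2.2))
    ((radMeas (1 / 2)).prod ((radMeas α).prod (radMeas β)))

lemma twoPiece_eq (α β : ℝ) :
    twoPiece α β =
      (2⁻¹ * (ENNReal.ofReal α * ENNReal.ofReal β)) •
        (Measure.dirac ((-1 : ℤ), (1 : ℤ), (1 : ℤ)) + Measure.dirac ((1 : ℤ), (-1 : ℤ), (-1 : ℤ))) +
      (2⁻¹ * (ENNReal.ofReal α * ENNReal.ofReal (1 - β))) •
        (Measure.dirac ((-1 : ℤ), (1 : ℤ), (-1 : ℤ)) + Measure.dirac ((1 : ℤ), (-1 : ℤ), (1 : ℤ))) +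
      (2⁻¹ * (ENNReal.ofReal (1 - α) * ENNReal.ofReal β)) •
        (Measure.dirac ((-1 : ℤ), (-1 : ℤ), (1 : ℤ)) + Measure.dirac ((1 : ℤ), (1 : ℤ), (-1 : ℤ))) +
      (2⁻¹ * (ENNReal.ofReal (1 - α) * ENNReal.ofReal (1 - β))) •
        (Measure.dirac ((-1 : ℤ), (-1 : ℤ), (-1 : ℤ)) + Measure.dirac ((1 : ℤ), (1 : ℤ), (1 : ℤ))) := by
  have hhalf' : ENNReal.ofReal (1 / 2 : ℝ) = 2⁻¹ := by
    rw [show (1/2:ℝ) = (2⁻¹:ℝ) by norm_num, ENNReal.ofReal_inv_of_pos (by norm_num)]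
    norm_num
  have hhalf : ENNReal.ofReal (1 - 1 / 2 : ℝ) = 2⁻¹ := by
    rw [show (1 - 1/2:ℝ) = 1/2 by norm_num]; exact hhalf'
  have hmm : Measurable (fun t : ℤ × ℤ × ℤ => (t.1, t.1 * t.2.1, t.1 * t.2.2)) := by fun_prop
  rw [twoPiece, radMeas, radMeas, radMeas]
  simp only [Measure.prod_add, Measure.add_prod, smul_prod', prod_smul',
    Measure.dirac_prod_dirac, Measure.map_add (hf := hmm), Measure.map_smul, Measure.map_dirac' hmm,
    smul_smul, hhalf, hhalf']
  norm_num
  match_scalars <;> ring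


lemma hBgen (β₁ β₂ α : ℝ) (hb1 : 0 ≤ β₁) (hb2 : 0 ≤ β₂) (hmix : (β₁ + β₂) / 2 = α) :
    ENNReal.ofReal β₁ + ENNReal.ofReal β₂ = 2 * ENNReal.ofReal α := by
  rw [← ENNReal.ofReal_add hb1 hb2, ← hmix, show (2:ℝ≥0∞) = ENNReal.ofReal (2:ℝ) from by norm_num,
    ← ENNReal.ofReal_mul (by norm_num)]
  congr 1; ring

lemma coefkey (x b₁ b₂ a : ℝ≥0∞) (hb : b₁ + b₂ = 2 * a) :
    2⁻¹ * (2⁻¹ * (x * b₁)) + 2⁻¹ * (2⁻¹ * (x * b₂)) = 2⁻¹ * (x * a) := by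
  have h : (2:ℝ≥0∞)⁻¹ * 2 = 1 := ENNReal.inv_mul_cancel (by norm_num) (by norm_num)
  calc 2⁻¹ * (2⁻¹ * (x * b₁)) + 2⁻¹ * (2⁻¹ * (x * b₂)) = 2⁻¹ * (2⁻¹ * (x * (b₁ + b₂))) := by ring
  _ = 2⁻¹ * ((2⁻¹ * 2) * (x * a)) := by rw [hb]; ring
  _ = 2⁻¹ * (x * a) := by rw [h, one_mul]


lemma coefkey2 (x b₁ b₂ a : ℝ≥0∞) (hb : b₁ + b₂ = 2 * a) :
    2⁻¹ * (2⁻¹ * (b₁ * x)) + 2⁻¹ * (2⁻¹ * (b₂ * x)) = 2⁻¹ * (a * x) := by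
  rw [mul_comm b₁ x, mul_comm b₂ x, mul_comm a x]; exact coefkey x b₁ b₂ a hb

lemma mixA (α β₁ β₂ : ℝ) (h1 : β₁ ∈ Set.Icc (0:ℝ) 1) (h2 : β₂ ∈ Set.Icc (0:ℝ) 1)
    (hmix : (β₁ + β₂) / 2 = α) :
    (2 : ℝ≥0∞)⁻¹ • twoPiece α β₁ + (2 : ℝ≥0∞)⁻¹ • twoPiece α β₂ = twoPiece α α := by
  have hB := hBgen β₁ β₂ α h1.1 h2.1 hmix
  have hB' := hBgen (1-β₁) (1-β₂) (1-α) (by linarith [h1.2]) (by linarith [h2.2]) (by linarith)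
  rw [twoPiece_eq, twoPiece_eq, twoPiece_eq]
  match_scalars <;> simp only [mul_one] <;>
    first
      | exact coefkey _ _ _ _ hB
      | exact coefkey _ _ _ _ hB'

lemma mixB (α β₁ β₂ : ℝ) (h1 : β₁ ∈ Set.Icc (0:ℝ) 1) (h2 : β₂ ∈ Set.Icc (0:ℝ) 1)
    (hmix : (β₁ + β₂) / 2 = α) :
    (2 : ℝ≥0∞)⁻¹ • twoPiece β₁ α + (2 : ℝ≥0∞)⁻¹ • twoPiece β₂ α = twoPiece α α := by
  have hB := hBgen β₁ β₂ α h1.1 h2.1 hmix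
  have hB' := hBgen (1-β₁) (1-β₂) (1-α) (by linarith [h1.2]) (by linarith [h2.2]) (by linarith)
  rw [twoPiece_eq, twoPiece_eq, twoPiece_eq]
  match_scalars <;> simp only [mul_one] <;>
    first
      | exact coefkey _ _ _ _ hB
      | exact coefkey _ _ _ _ hB'
      | exact coefkey2 _ _ _ _ hB
      | exact coefkey2 _ _ _ _ hB'

lemma swap_diag (α : ℝ) :
    Measure.map (fun t : ℤ × ℤ × ℤ => (t.1, t.2.2, t.2.1)) (twoPiece α α) = twoPiece α α := by
  have hsw : Measurable (fun t : ℤ × ℤ × ℤ => (t.1, t.2.2, t.2.1)) := by fun_prop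
  rw [twoPiece_eq]
  simp only [Measure.map_add (hf := hsw), Measure.map_smul, Measure.map_dirac' hsw]
  match_scalars <;> ring

/-- two training setups whose spurious parameters average to the common
parameter induce identical pooled joint distributions (up to the coordinate swap that
exchanges their underlying invariant coordinates), both equal to the diagonal two-piece
environment. -/
theorem twoPiece_unidentifiable (α β₁ β₂ β₁' β₂' : ℝ)
    (hα : α ∈ Set.Icc (0 : ℝ) 1)
    (h1 : β₁ ∈ Set.Icc (0 : ℝ) 1) (h2 : β₂ ∈ Set.Icc (0 : ℝ) 1)
    (h1' : β₁' ∈ Set.Icc (0 : ℝ) 1) (h2' : β₂' ∈ Set.Icc (0 : ℝ) 1)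
    (hmix : (β₁ + β₂) / 2 = α) (hmix' : (β₁' + β₂') / 2 = α) :
    (2 : ℝ≥0∞)⁻¹ • twoPiece α β₁ + (2 : ℝ≥0∞)⁻¹ • twoPiece α β₂ =
      Measure.map (fun t : ℤ × ℤ × ℤ => (t.1, t.2.2, t.2.1))
        ((2 : ℝ≥0∞)⁻¹ • twoPiece β₁' α + (2 : ℝ≥0∞)⁻¹ • twoPiece β₂' α) ∧
    (2 : ℝ≥0∞)⁻¹ • twoPiece α β₁ + (2 : ℝ≥0∞)⁻¹ • twoPiece α β₂ = twoPiece α α := by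
  have h := mixA α β₁ β₂ h1 h2 hmix
  refine ⟨?_, h⟩
  rw [h, mixB α β₁' β₂' h1' h2' hmix', swap_diag]
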